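/- Let h(x) := −4e^x(e^{2x}+3) / ((e^x−1)(e^x+3)((2e^x+e^{2x}−3)log((e^x−1)/(e^x+3)) − 4e^x x)) for x > 0. Then there exist constants c, c' > 0 and δ ∈ (0,1) such that c ≤ −h(x)·x²·log x ≤ c' for all 0 < x < δ. Consequently ∫₀^δ √(h(x)) dx = ∞. -/

import Mathlib

open Real MeasureTheory

noncomputable def h8 (x : ℝ) : ℝ :=
  -4 * exp x * (exp (2 * x) + 3) /
    ((exp x - 1) * (exp x + 3) *
      ((2 * exp x + exp (2 * x) - 3) * Real.log ((exp x - 1) / (exp x + 3)) - 4 * exp x * x))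

/-! Writing `E = exp x`, one has `h8 x = A / (P * B)` with `A = 4E(E² + 3) → 16`,
`P = (E - 1)(E + 3) ~ 4x` and `B = 4Ex - P log((E - 1)/(E + 3)) ~ 4x(-log x)`, so
`-h8 x * x² * log x` stays between two positive constants as `x → 0⁺`. Hence
`√(h8 x) ≥ c / (x √(-log x))`, the derivative of `-2c √(-log x)`, which is unbounded at `0⁺`;
so the integral of `√(h8 x)` diverges there. -/

open Filter Topology Asymptotics Set

theorem hasDerivAt_sqrt_neg_log {x : ℝ} (hx0 : 0 < x) (hx1 : x < 1) :
    HasDerivAt (fun y ↦ √(-log y)) (-(2 * x * √(-log x))⁻¹) x := by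
  have hlog : 0 < -log x := neg_pos.2 (log_neg hx0 hx1)
  have h := ((hasDerivAt_log hx0.ne').neg).sqrt hlog.ne'
  simp only [Pi.neg_apply] at h
  convert h using 1
  field_simp

theorem tendsto_sqrt_neg_log_nhdsGT_zero : Tendsto (fun x ↦ √(-log x)) (𝓝[>] 0) atTop :=
  tendsto_sqrt_atTop.comp (tendsto_neg_atBot_atTop.comp tendsto_log_nhdsGT_zero)

theorem not_integrableOn_div_mul_sqrt_neg_log {a δ : ℝ} (ha : a ≠ 0) (hδ : 0 < δ) :
    ¬IntegrableOn (fun x ↦ a / (x * √(-log x))) (Ioo 0 δ) := by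
  have hunit : ∀ᶠ x in 𝓝[>] (0 : ℝ), x ∈ Ioo 0 1 := Ioo_mem_nhdsGT one_pos
  refine not_integrableOn_of_tendsto_norm_atTop_of_deriv_isBigO_filter (𝓝[>] 0)
    (Ioo_mem_nhdsGT hδ) ?_ ?_ ?_ (f := fun x ↦ √(-log x))
  · filter_upwards [hunit] with x hx using (hasDerivAt_sqrt_neg_log hx.1 hx.2).differentiableAt
  · exact tendsto_norm_atTop_atTop.comp tendsto_sqrt_neg_log_nhdsGT_zero
  · have hderiv : deriv (fun x ↦ √(-log x)) =ᶠ[𝓝[>] 0]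
        fun x ↦ -(2 * a)⁻¹ * (a / (x * √(-log x))) := by
      filter_upwards [hunit] with x hx
      rw [(hasDerivAt_sqrt_neg_log hx.1 hx.2).deriv]
      field_simp
    exact hderiv.trans_isBigO (isBigO_const_mul_self _ _ _)

theorem lintegral_ofReal_div_mul_sqrt_neg_log_eq_top {a δ : ℝ} (ha : 0 < a) (hδ : 0 < δ) :
    ∫⁻ x in Ioo 0 δ, ENNReal.ofReal (a / (x * √(-log x))) = ⊤ := by
  by_contra hfin
  refine not_integrableOn_div_mul_sqrt_neg_log ha.ne' hδ
    ((lintegral_ofReal_ne_top_iff_integrable ?_ ?_).1 hfin)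
  · exact (measurable_const.div (measurable_id.mul measurable_log.neg.sqrt)).aestronglyMeasurable
  · filter_upwards [ae_restrict_mem measurableSet_Ioo] with x hx
    exact div_nonneg ha.le (mul_nonneg hx.1.le (sqrt_nonneg _))

theorem div_mul_sqrt_neg_log_le_sqrt {c y x : ℝ} (hx0 : 0 < x) (hx1 : x < 1)
    (h : c ≤ -y * x ^ 2 * log x) : √c / (x * √(-log x)) ≤ √y := by
  have hm : 0 < x ^ 2 * -log x := mul_pos (by positivity) (neg_pos.2 (log_neg hx0 hx1))
  have hy : c / (x ^ 2 * -log x) ≤ y := by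
    rw [div_le_iff₀ hm]
    linarith
  calc √c / (x * √(-log x)) = √(c / (x ^ 2 * -log x)) := by
        rw [sqrt_div' _ hm.le, sqrt_mul (sq_nonneg x), sqrt_sq hx0.le]
    _ ≤ √y := sqrt_le_sqrt hy

theorem lintegral_ofReal_sqrt_eq_top_of_le_neg_mul_sq_mul_log {f : ℝ → ℝ} {c δ : ℝ}
    (hc : 0 < c) (hδ0 : 0 < δ) (hδ1 : δ ≤ 1)
    (hf : ∀ x, 0 < x → x < δ → c ≤ -f x * x ^ 2 * log x) :
    ∫⁻ x in Ioo 0 δ, ENNReal.ofReal √(f x) = ⊤ := by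
  rw [← top_le_iff, ← lintegral_ofReal_div_mul_sqrt_neg_log_eq_top (sqrt_pos.2 hc) hδ0]
  refine setLIntegral_mono' measurableSet_Ioo fun x hx ↦ ENNReal.ofReal_le_ofReal ?_
  exact div_mul_sqrt_neg_log_le_sqrt hx.1 (hx.2.trans_le hδ1) (hf x hx.1 hx.2)

theorem h8_eq (x : ℝ) :
    h8 x = 4 * exp x * (exp x ^ 2 + 3) /
      ((exp x - 1) * (exp x + 3) *
        (4 * exp x * x - (exp x - 1) * (exp x + 3) * log ((exp x - 1) / (exp x + 3)))) := by
  rw [h8, ← neg_div_neg_eq, show 2 * x = (2 : ℕ) * x by norm_num, exp_nat_mul]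
  congr 1 <;> ring

section SmallX

variable {x : ℝ}

theorem exp_sub_one_mem_Icc (hx0 : 0 ≤ x) (hx1 : x ≤ 1) : exp x - 1 ∈ Icc x (2 * x) := by
  have h := abs_exp_sub_one_le (abs_le.2 ⟨by linarith, hx1⟩)
  rw [abs_of_nonneg hx0, abs_of_nonneg (by linarith [add_one_le_exp x])] at h
  exact ⟨by linarith [add_one_le_exp x], h⟩

theorem exp_sub_one_mul_exp_add_three_mem_Icc (hx0 : 0 ≤ x) (hx1 : x ≤ 1 / 2) :
    (exp x - 1) * (exp x + 3) ∈ Icc (4 * x) (10 * x) := by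
  obtain ⟨hlo, hhi⟩ := exp_sub_one_mem_Icc hx0 (by linarith)
  constructor <;> nlinarith

theorem log_exp_sub_one_div_exp_add_three_mem_Icc (hx0 : 0 < x) (hx1 : x ≤ 1 / 5) :
    log ((exp x - 1) / (exp x + 3)) ∈ Icc (2 * log x) (log x) := by
  obtain ⟨hlo, hhi⟩ := exp_sub_one_mem_Icc hx0.le (by linarith)
  have h3 : 0 < exp x + 3 := by positivity
  rw [show 2 * log x = log (x ^ 2) by simp [log_pow]]
  constructor
  · refine log_le_log (by positivity) ((le_div_iff₀ h3).2 ?_)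
    nlinarith
  · refine log_le_log (div_pos (by linarith) h3) ((div_le_iff₀ h3).2 ?_)
    nlinarith [add_one_le_exp x]

theorem one_lt_neg_log (hx0 : 0 < x) (hx1 : x ≤ 1 / 5) : 1 < -log x := by
  have h5 : 1 < log 5 := (lt_log_iff_exp_lt (by norm_num)).2 (exp_one_lt_three.trans (by norm_num))
  have hlog : log x ≤ log (1 / 5) := log_le_log hx0 hx1
  rw [one_div, log_inv] at hlog
  linarith

theorem h8_numerator_mem_Icc (hx0 : 0 ≤ x) (hx1 : x ≤ 1 / 2) :
    4 * exp x * (exp x ^ 2 + 3) ∈ Icc 16 56 := by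
  obtain ⟨hlo, hhi⟩ := exp_sub_one_mem_Icc hx0 (by linarith)
  constructor <;> nlinarith

theorem h8_log_factor_mem_Icc (hx0 : 0 < x) (hx1 : x ≤ 1 / 5) :
    4 * exp x * x - (exp x - 1) * (exp x + 3) * log ((exp x - 1) / (exp x + 3)) ∈
      Icc (4 * x * -log x) (28 * x * -log x) := by
  obtain ⟨hPlo, hPhi⟩ := exp_sub_one_mul_exp_add_three_mem_Icc hx0.le (by linarith)
  obtain ⟨hLlo, hLhi⟩ := log_exp_sub_one_div_exp_add_three_mem_Icc hx0 hx1
  obtain ⟨-, hE⟩ := exp_sub_one_mem_Icc hx0.le (by linarith)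
  have hℓ := one_lt_neg_log hx0 hx1
  constructor
  · have hPL : 4 * x * -log x ≤ (exp x - 1) * (exp x + 3) * -log ((exp x - 1) / (exp x + 3)) := by
      gcongr
      linarith
    nlinarith [exp_pos x]
  · have hPL : (exp x - 1) * (exp x + 3) * -log ((exp x - 1) / (exp x + 3)) ≤
        10 * x * (2 * -log x) := by
      gcongr <;> linarith
    nlinarith

theorem neg_h8_mul_sq_mul_log_mem_Icc (hx0 : 0 < x) (hx1 : x ≤ 1 / 5) :
    -h8 x * x ^ 2 * log x ∈ Icc (2 / 35) (7 / 2) := by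
  obtain ⟨hAlo, hAhi⟩ := h8_numerator_mem_Icc hx0.le (by linarith)
  obtain ⟨hPlo, hPhi⟩ := exp_sub_one_mul_exp_add_three_mem_Icc hx0.le (by linarith)
  obtain ⟨hBlo, hBhi⟩ := h8_log_factor_mem_Icc hx0 hx1
  set A := 4 * exp x * (exp x ^ 2 + 3)
  set P := (exp x - 1) * (exp x + 3)
  set B := 4 * exp x * x - P * log ((exp x - 1) / (exp x + 3))
  set ℓ := -log x
  have hxℓ : 0 < x * ℓ := mul_pos hx0 (zero_lt_one.trans (one_lt_neg_log hx0 hx1))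
  have hPB : 0 < P * B := mul_pos (by linarith) (by linarith)
  have hform : -h8 x * x ^ 2 * log x = A * (x * (x * ℓ)) / (P * B) := by
    rw [h8_eq]
    ring
  rw [hform, mem_Icc, le_div_iff₀ hPB, div_le_iff₀ hPB]
  constructor
  · calc 2 / 35 * (P * B) ≤ 2 / 35 * (10 * x * (28 * (x * ℓ))) := by gcongr <;> linarith
      _ = 16 * (x * (x * ℓ)) := by ring
      _ ≤ A * (x * (x * ℓ)) := by gcongr
  · calc A * (x * (x * ℓ)) ≤ 56 * (x * (x * ℓ)) := by gcongr
      _ = 7 / 2 * (4 * x * (4 * (x * ℓ))) := by ring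
      _ ≤ 7 / 2 * (P * B) := by gcongr <;> linarith

end SmallX

theorem figure8_WP_complete_at_zero :
    ∃ c c' δ : ℝ, 0 < c ∧ 0 < c' ∧ 0 < δ ∧ δ < 1 ∧
      (∀ x, 0 < x → x < δ →
        c ≤ -h8 x * x ^ 2 * Real.log x ∧ -h8 x * x ^ 2 * Real.log x ≤ c') ∧
      ∫⁻ x in Set.Ioo 0 δ, ENNReal.ofReal (Real.sqrt (h8 x)) = ⊤ := by
  have hbounds : ∀ x : ℝ, 0 < x → x < 1 / 5 → -h8 x * x ^ 2 * log x ∈ Icc (2 / 35) (7 / 2) :=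
    fun x hx0 hx1 ↦ neg_h8_mul_sq_mul_log_mem_Icc hx0 hx1.le
  refine ⟨2 / 35, 7 / 2, 1 / 5, by norm_num, by norm_num, by norm_num, by norm_num, hbounds, ?_⟩
  exact lintegral_ofReal_sqrt_eq_top_of_le_neg_mul_sq_mul_log (by norm_num) (by norm_num)
    (by norm_num) fun x hx0 hx1 ↦ (hbounds x hx0 hx1).1
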